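/- Let G be a finite group, K a Carter subgroup of G, and z ∈ Z(K), z ≠ e, such that Carter subgroups of C_G(z) are conjugate in C_G(z). Then C_G(z) is self-normalizing in G. -/

import Mathlib

/-!
A Frattini argument: if `x` normalizes `C = C_G(z)`, then `K^x` is again a Carter subgroup of `C`,
hence `K^x = K^c` for some `c ∈ C`; so `c⁻¹x` normalizes `K`, and `N_G(K) = K ≤ C` gives `x ∈ C`.
-/

open Pointwise

/-- A Carter subgroup: a nilpotent self-normalizing subgroup. -/
def IsCarter {G : Type*} [Group G] (H : Subgroup G) : Prop :=
  Group.IsNilpotent H ∧ Subgroup.normalizer (H : Set G) = H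

namespace Subgroup

variable {G : Type*} [Group G]

theorem conj_smul_eq_self_iff_mem_normalizer {H : Subgroup G} {g : G} :
    MulAut.conj g • H = H ↔ g ∈ normalizer (H : Set G) :=
  mem_normalizer_iff_map_conj_eq.symm

theorem normalizer_eq_self_of_conjugates_conj {C K : Subgroup G}
    (hNK : normalizer (K : Set G) ≤ C)
    (hconj : ∀ x : G, MulAut.conj x • K ≤ C → ∃ c ∈ C, MulAut.conj c • MulAut.conj x • K = K) :
    normalizer (C : Set G) = C := by
  refine le_antisymm (fun x hx => ?_) le_normalizer
  have hKx : MulAut.conj x • K ≤ C := by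
    rw [← conj_smul_eq_self_iff_mem_normalizer.2 hx]
    exact pointwise_smul_le_pointwise_smul_iff.2 (le_normalizer.trans hNK)
  obtain ⟨c, hc, hcx⟩ := hconj x hKx
  have hcxC : c * x ∈ C :=
    hNK (conj_smul_eq_self_iff_mem_normalizer.1 (by rwa [map_mul, mul_smul]))
  exact (C.mul_mem_cancel_left hc).1 hcxC

end Subgroup

namespace IsCarter

variable {G : Type*} [Group G] {H : Subgroup G}

theorem conj_smul (hH : IsCarter H) (x : G) : IsCarter (MulAut.conj x • H) :=
  ⟨Group.nilpotent_of_mulEquiv (Subgroup.equivSMul (MulAut.conj x) H) (_h := hH.1),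
    (Subgroup.map_equiv_normalizer_eq H (MulAut.conj x)).symm.trans (congrArg _ hH.2)⟩

theorem subgroupOf (hH : IsCarter H) {C : Subgroup G} (hHC : H ≤ C) :
    IsCarter (H.subgroupOf C) :=
  ⟨Group.nilpotent_of_mulEquiv (Subgroup.subgroupOfEquivOfLe hHC).symm (_h := hH.1), by
    rw [← Subgroup.subgroupOf_normalizer_eq hHC, hH.2]⟩

end IsCarter

theorem centralizer_self_normalizing_general {G : Type*} [Group G]
    (K : Subgroup G) (hK : IsCarter K) (z : G)
    (hzc : ∀ k ∈ K, k * z = z * k)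
    (hconj : ∀ K₁ K₂ : Subgroup (Subgroup.centralizer {z} : Subgroup G),
      IsCarter K₁ → IsCarter K₂ →
        ∃ c : (Subgroup.centralizer {z} : Subgroup G), MulAut.conj c • K₁ = K₂) :
    Subgroup.normalizer ((Subgroup.centralizer {z} : Subgroup G) : Set G) =
      (Subgroup.centralizer {z} : Subgroup G) := by
  have hKC : K ≤ Subgroup.centralizer {z} := fun k hk =>
    Subgroup.mem_centralizer_singleton_iff.2 (hzc k hk)
  refine Subgroup.normalizer_eq_self_of_conjugates_conj (hK.2.le.trans hKC) fun x hKx => ?_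
  obtain ⟨c, hc⟩ := hconj _ _ ((hK.conj_smul x).subgroupOf hKx) (hK.subgroupOf hKC)
  refine ⟨c, c.2, ?_⟩
  rwa [Subgroup.conj_smul_subgroupOf hKx, Subgroup.subgroupOf_inj,
    inf_of_le_left (Subgroup.conj_smul_le_of_le hKx c), inf_of_le_left hKC] at hc

theorem centralizer_self_normalizing {G : Type*} [Group G] [Finite G]
    (K : Subgroup G) (hK : IsCarter K) (z : G) (hz : z ≠ 1)
    (hzK : z ∈ K) (hzc : ∀ k ∈ K, k * z = z * k)
    (hconj : ∀ K₁ K₂ : Subgroup (Subgroup.centralizer {z} : Subgroup G),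
      IsCarter K₁ → IsCarter K₂ →
        ∃ c : (Subgroup.centralizer {z} : Subgroup G), MulAut.conj c • K₁ = K₂) :
    Subgroup.normalizer ((Subgroup.centralizer {z} : Subgroup G) : Set G) =
      (Subgroup.centralizer {z} : Subgroup G) :=
  centralizer_self_normalizing_general K hK z hzc hconj
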